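/- Let a ∈ ℝ, let I_f be an interval with least element a, nonempty interior, and I_f ⊂ [a,∞), let m ∈ ℕ*, let α = (α₁,…,α_m) ∈ (0,1]^m, let q_a ∈ ℝ^m, and let f : ℝ^m × I_f → ℝ^m be a Carathéodory function that preserves integrability, i.e. f(q(·),·) is locally integrable on I_f for every locally integrable q : I_f → ℝ^m. Then a function q : I_f → ℝ^m is a global solution of the Riemann–Liouville Cauchy problem (D^{α_i}_{a+}[q_i] = f_i(q(·),·) a.e. on I_f, with I^{1−α_i}_{a+}[q_i](a) = (q_a)_i for each i) if and only if q is locally integrable on I_f and, for almost every t ∈ I_f and every i ∈ {1,…,m}, q_i(t) = ((t−a)^{α_i−1}/Γ(α_i))·(q_a)_i + (1/Γ(α_i)) ∫_a^t (t−τ)^{α_i−1} f_i(q(τ),τ) dτ. -/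

import Mathlib

open MeasureTheory Set

/-- Left Riemann–Liouville fractional integral of order `α` with base point `a`
(for `α = 0` it is the identity). -/
noncomputable def rlInt (a α : ℝ) (q : ℝ → ℝ) (t : ℝ) : ℝ :=
  if α = 0 then q t else (1 / Real.Gamma α) * ∫ τ in a..t, (t - τ) ^ (α - 1) * q τ

/-- `q` is locally integrable on the interval `I` with least element `a`. -/
def LocIntegrableOn (a : ℝ) (I : Set ℝ) (q : ℝ → ℝ) : Prop :=
  ∀ b ∈ I, MeasureTheory.IntegrableOn q (Set.Icc a b)

/-- `q` is a global solution on `If` of the Riemann–Liouville Cauchy problem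
`D^{α_i}_{a+}[q_i] = F_i(q(·),·)` a.e. on `If`, `I^{1-α_i}_{a+}[q_i](a) = (qa)_i`:
each `q_i` is locally integrable, `I^{1-α_i}_{a+}[q_i]` agrees a.e. on `If` with a locally
absolutely continuous function `t ↦ (qa)_i + ∫_a^t h`, whose value at `a` is `(qa)_i`
and whose derivative `h` (the RL fractional derivative) equals `F_i(q(t),t)` a.e. -/
def IsRLSolution (a : ℝ) (If : Set ℝ) {m : ℕ} (α : Fin m → ℝ) (qa : Fin m → ℝ)
    (F : (Fin m → ℝ) → ℝ → Fin m → ℝ) (q : ℝ → Fin m → ℝ) : Prop :=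
  (∀ i, LocIntegrableOn a If fun t => q t i) ∧
  ∀ i, ∃ h : ℝ → ℝ, LocIntegrableOn a If h ∧
    (∀ᵐ t ∂(MeasureTheory.volume.restrict If),
      rlInt a (1 - α i) (fun τ => q τ i) t = qa i + ∫ τ in a..t, h τ) ∧
    (∀ᵐ t ∂(MeasureTheory.volume.restrict If), h t = F (q t) t i)

/-!
Write `Iᵞ` for the Riemann–Liouville integral based at `a`. Fubini's theorem and the Beta integral
give the semigroup law `Iʳ (Iᵖ g) = Iᵖ⁺ʳ g` and
`Iʳ [(· - a) ^ (p - 1)] = Γ(p) / Γ(p + r) · (· - a) ^ (p + r - 1)`. Hence the right-hand side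
`w = (· - a) ^ (α - 1) / Γ(α) · qₐ + Iᵅ f(q)` of the Volterra equation satisfies
`I¹⁻ᵅ w = qₐ + ∫ₐ f(q)`, i.e. `w` solves the Cauchy problem. Conversely, if
`I¹⁻ᵅ q = I¹⁻ᵅ w` a.e., applying `Iᵅ` shows that `q` and `w` have the same primitive, so they
agree a.e. by the Lebesgue differentiation theorem. For `α = 1` the two conditions coincide.
-/

theorem ae_eq_of_forall_intervalIntegral_eq {a b : ℝ} {f g : ℝ → ℝ}
    (hf : IntervalIntegrable f volume a b) (hg : IntervalIntegrable g volume a b)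
    (hfg : ∀ t ∈ Icc a b, ∫ s in a..t, f s = ∫ s in a..t, g s) :
    ∀ᵐ t ∂volume.restrict (Icc a b), f t = g t := by
  rcases lt_or_ge b a with hba | hab
  · simp [Icc_eq_empty_of_lt hba]
  rw [← restrict_Ioo_eq_restrict_Icc]
  filter_upwards [ae_restrict_of_ae hf.ae_hasDerivAt_integral,
    ae_restrict_of_ae hg.ae_hasDerivAt_integral, ae_restrict_mem measurableSet_Ioo]
    with t hft hgt ht
  have ht' : t ∈ uIcc a b := by rw [uIcc_of_le hab]; exact Ioo_subset_Icc_self ht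
  have ha : a ∈ uIcc a b := left_mem_uIcc
  have heq : (fun x => ∫ s in a..x, f s) =ᶠ[nhds t] fun x => ∫ s in a..x, g s :=
    Filter.eventually_of_mem (Icc_mem_nhds ht.1 ht.2) hfg
  exact (hft ht' a ha).unique ((hgt ht' a ha).congr_of_eventuallyEq heq)

theorem ae_restrict_of_forall_ae_restrict_Icc {a : ℝ} {I : Set ℝ} (hI : I ⊆ Ici a)
    {P : ℝ → Prop} (h : ∀ b ∈ I, ∀ᵐ x ∂volume.restrict (Icc a b), P x) :
    ∀ᵐ x ∂volume.restrict I, P x :=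
  ae_restrict_of_ae_restrict_inter_Ioo fun _ b _ hb _ =>
    ae_restrict_of_ae_restrict_of_subset
      (fun _ hx => ⟨hI hx.1, hx.2.2.le⟩ : I ∩ Ioo _ b ⊆ Icc a b) (h b hb)

theorem ae_mem_Ioo_restrict_Ioc {a t : ℝ} : ∀ᵐ τ ∂volume.restrict (Ioc a t), τ ∈ Ioo a t := by
  rw [← restrict_Ioo_eq_restrict_Ioc]
  exact ae_restrict_mem measurableSet_Ioo

theorem restrict_Ioc_restrict_Ici {a t τ : ℝ} (hτ : a < τ) :
    (volume.restrict (Ioc a t)).restrict (Ici τ) = volume.restrict (Icc τ t) := by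
  rw [Measure.restrict_restrict measurableSet_Ici]
  congr 1
  ext x
  simp only [mem_inter_iff, mem_Ici, mem_Ioc, mem_Icc]
  constructor
  · rintro ⟨h1, -, h3⟩; exact ⟨h1, h3⟩
  · rintro ⟨h1, h2⟩; exact ⟨h1, hτ.trans_le h1, h2⟩

theorem intervalIntegrable_sub_rpow_mul {a t γ : ℝ} {g : ℝ → ℝ} (hγ : 0 ≤ γ)
    (hg : IntervalIntegrable g volume a t) :
    IntervalIntegrable (fun τ => (t - τ) ^ γ * g τ) volume a t :=
  hg.continuousOn_mul ((Real.continuous_rpow_const hγ).comp (continuous_sub_left t)).continuousOn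

theorem integral_rpow_mul_sub_rpow {p r c : ℝ} (hp : 0 < p) (hr : 0 < r) (hc : 0 < c) :
    ∫ x in (0 : ℝ)..c, x ^ (p - 1) * (c - x) ^ (r - 1) =
      c ^ (p + r - 1) * ProbabilityTheory.beta p r := by
  rw [← Complex.ofReal_inj, ← intervalIntegral.integral_ofReal]
  calc ∫ x in (0 : ℝ)..c, ((x ^ (p - 1) * (c - x) ^ (r - 1) : ℝ) : ℂ)
      = ∫ x in (0 : ℝ)..c, (x : ℂ) ^ ((p : ℂ) - 1) * ((c : ℂ) - x) ^ ((r : ℂ) - 1) := by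
        refine intervalIntegral.integral_congr fun x hx => ?_
        rw [uIcc_of_le hc.le] at hx
        push_cast [Complex.ofReal_cpow hx.1, Complex.ofReal_cpow (sub_nonneg.2 hx.2)]
        rfl
    _ = (c : ℂ) ^ ((p : ℂ) + r - 1) * Complex.betaIntegral p r :=
        Complex.betaIntegral_scaled _ _ hc
    _ = _ := by
        rw [Complex.betaIntegral_eq_Gamma_mul_div _ _ (by simpa) (by simpa),
          ProbabilityTheory.beta, ← Complex.ofReal_add, Complex.Gamma_ofReal,
          Complex.Gamma_ofReal, Complex.Gamma_ofReal, ← Complex.ofReal_one, ← Complex.ofReal_sub,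
          ← Complex.ofReal_cpow hc.le]
        norm_cast

theorem integral_sub_rpow_mul_sub_rpow {p r u t : ℝ} (hp : 0 < p) (hr : 0 < r) (hut : u < t) :
    ∫ s in u..t, (t - s) ^ (r - 1) * (s - u) ^ (p - 1) =
      ProbabilityTheory.beta p r * (t - u) ^ (p + r - 1) := by
  have := intervalIntegral.integral_comp_sub_right
    (fun x => x ^ (p - 1) * (t - u - x) ^ (r - 1)) u (a := u) (b := t)
  simp only [sub_sub_sub_cancel_right, sub_self] at this
  rw [mul_comm, ← integral_rpow_mul_sub_rpow hp hr (sub_pos.2 hut), ← this]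
  exact intervalIntegral.integral_congr fun s _ => mul_comm _ _

theorem intervalIntegrable_sub_rpow_mul_sub_rpow {p r u t : ℝ} (hp : 0 < p) (hr : 0 < r)
    (hut : u < t) :
    IntervalIntegrable (fun s => (t - s) ^ (r - 1) * (s - u) ^ (p - 1)) volume u t :=
  intervalIntegral.intervalIntegrable_of_integral_ne_zero <| by
    rw [integral_sub_rpow_mul_sub_rpow hp hr hut]
    exact (mul_pos (ProbabilityTheory.beta_pos hp hr) (Real.rpow_pos_of_pos (sub_pos.2 hut) _)).ne'

section Semigroup

variable {a t p r : ℝ} {g : ℝ → ℝ}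

/-- The integrand of `∫ₐᵗ (t - s) ^ (r - 1) ∫ₐˢ (s - τ) ^ (p - 1) g τ dτ ds` at `(s, τ)`,
extended by zero from the triangle `τ ≤ s` to the square. -/
noncomputable def semigroupIntegrand (t p r : ℝ) (g : ℝ → ℝ) : ℝ × ℝ → ℝ :=
  {x : ℝ × ℝ | x.2 ≤ x.1}.indicator fun x => (t - x.1) ^ (r - 1) * (x.1 - x.2) ^ (p - 1) * g x.2

theorem semigroupIntegrand_eq_indicator_Ici_mul (s τ : ℝ) :
    semigroupIntegrand t p r g (s, τ) =
      (Ici τ).indicator (fun s => (t - s) ^ (r - 1) * (s - τ) ^ (p - 1)) s * g τ := by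
  by_cases h : τ ≤ s <;> simp [semigroupIntegrand, h]

theorem semigroupIntegrand_eq_mul_indicator_Iic (s τ : ℝ) :
    semigroupIntegrand t p r g (s, τ) =
      (t - s) ^ (r - 1) * (Iic s).indicator (fun τ => (s - τ) ^ (p - 1) * g τ) τ := by
  by_cases h : τ ≤ s <;> simp [semigroupIntegrand, h, mul_assoc]

theorem norm_semigroupIntegrand {s τ : ℝ} (hs : s ≤ t) :
    ‖semigroupIntegrand t p r g (s, τ)‖ = semigroupIntegrand t p r (fun τ => |g τ|) (s, τ) := by
  by_cases h : τ ≤ s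
  · simp only [semigroupIntegrand, indicator, mem_ofPred_eq, h, if_true, Real.norm_eq_abs, abs_mul]
    rw [abs_of_nonneg (Real.rpow_nonneg (sub_nonneg.2 hs) _),
      abs_of_nonneg (Real.rpow_nonneg (sub_nonneg.2 h) _)]
  · simp [semigroupIntegrand, h]

theorem integral_semigroupIntegrand_left {s : ℝ} (hs : s ∈ Ioc a t) :
    ∫ τ in Ioc a t, semigroupIntegrand t p r g (s, τ) =
      (t - s) ^ (r - 1) * ∫ τ in a..s, (s - τ) ^ (p - 1) * g τ := by
  simp_rw [semigroupIntegrand_eq_mul_indicator_Iic, MeasureTheory.integral_const_mul,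
    MeasureTheory.integral_indicator measurableSet_Iic, Measure.restrict_restrict measurableSet_Iic,
    Iic_inter_Ioc_of_le hs.2, intervalIntegral.integral_of_le hs.1.le]

theorem integrable_semigroupIntegrand_right (hp : 0 < p) (hr : 0 < r) {τ : ℝ}
    (hτ : τ ∈ Ioo a t) :
    Integrable (fun s => semigroupIntegrand t p r g (s, τ)) (volume.restrict (Ioc a t)) := by
  simp_rw [semigroupIntegrand_eq_indicator_Ici_mul]
  refine Integrable.mul_const ?_ _
  rw [integrable_indicator_iff measurableSet_Ici, IntegrableOn, restrict_Ioc_restrict_Ici hτ.1,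
    ← IntegrableOn, integrableOn_Icc_iff_integrableOn_Ioc,
    ← intervalIntegrable_iff_integrableOn_Ioc_of_le hτ.2.le]
  exact intervalIntegrable_sub_rpow_mul_sub_rpow hp hr hτ.2

theorem integral_semigroupIntegrand_right (hp : 0 < p) (hr : 0 < r) {τ : ℝ} (hτ : τ ∈ Ioo a t) :
    ∫ s in Ioc a t, semigroupIntegrand t p r g (s, τ) =
      ProbabilityTheory.beta p r * ((t - τ) ^ (p + r - 1) * g τ) := by
  simp_rw [semigroupIntegrand_eq_indicator_Ici_mul, MeasureTheory.integral_mul_const,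
    MeasureTheory.integral_indicator measurableSet_Ici, restrict_Ioc_restrict_Ici hτ.1,
    integral_Icc_eq_integral_Ioc, ← intervalIntegral.integral_of_le hτ.2.le,
    integral_sub_rpow_mul_sub_rpow hp hr hτ.2]
  ring

theorem integrable_semigroupIntegrand (hp : 0 < p) (hr : 0 < r) (hpr : 1 ≤ p + r)
    (hat : a ≤ t) (hg : IntervalIntegrable g volume a t) :
    Integrable (semigroupIntegrand t p r g)
      ((volume.restrict (Ioc a t)).prod (volume.restrict (Ioc a t))) := by
  have hmeas : AEStronglyMeasurable (semigroupIntegrand t p r g)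
      ((volume.restrict (Ioc a t)).prod (volume.restrict (Ioc a t))) := by
    refine AEStronglyMeasurable.indicator (AEStronglyMeasurable.mul ?_
      ((intervalIntegrable_iff_integrableOn_Ioc_of_le hat).1 hg).aestronglyMeasurable.comp_snd)
      (measurableSet_le measurable_snd measurable_fst)
    exact Measurable.aestronglyMeasurable (by fun_prop)
  rw [integrable_prod_iff' hmeas]
  refine ⟨ae_mem_Ioo_restrict_Ioc.mono fun τ hτ => integrable_semigroupIntegrand_right hp hr hτ, ?_⟩
  -- `1 ≤ p + r` makes `(t - τ) ^ (p + r - 1)` bounded, so the `τ`-marginal is dominated by `|g|`.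
  have hdom : Integrable (fun τ => ProbabilityTheory.beta p r * ((t - τ) ^ (p + r - 1) * |g τ|))
      (volume.restrict (Ioc a t)) :=
    ((intervalIntegrable_iff_integrableOn_Ioc_of_le hat).1
      (intervalIntegrable_sub_rpow_mul (sub_nonneg.2 hpr) hg.abs)).const_mul _
  refine hdom.congr (ae_mem_Ioo_restrict_Ioc.mono fun τ hτ => ?_)
  dsimp only
  rw [← integral_semigroupIntegrand_right (g := fun τ => |g τ|) hp hr hτ]
  exact setIntegral_congr_fun measurableSet_Ioc fun s hs => (norm_semigroupIntegrand hs.2).symm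

theorem intervalIntegrable_sub_rpow_mul_integral (hp : 0 < p) (hr : 0 < r) (hpr : 1 ≤ p + r)
    (hat : a ≤ t) (hg : IntervalIntegrable g volume a t) :
    IntervalIntegrable (fun s => (t - s) ^ (r - 1) * ∫ τ in a..s, (s - τ) ^ (p - 1) * g τ)
      volume a t := by
  rw [intervalIntegrable_iff_integrableOn_Ioc_of_le hat]
  refine (integrable_semigroupIntegrand hp hr hpr hat hg).integral_prod_left.congr ?_
  filter_upwards [ae_restrict_mem measurableSet_Ioc] with s hs
  exact integral_semigroupIntegrand_left hs

theorem integral_sub_rpow_mul_integral (hp : 0 < p) (hr : 0 < r) (hpr : 1 ≤ p + r)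
    (hat : a ≤ t) (hg : IntervalIntegrable g volume a t) :
    ∫ s in a..t, (t - s) ^ (r - 1) * ∫ τ in a..s, (s - τ) ^ (p - 1) * g τ =
      ProbabilityTheory.beta p r * ∫ τ in a..t, (t - τ) ^ (p + r - 1) * g τ := by
  rw [intervalIntegral.integral_of_le hat, intervalIntegral.integral_of_le hat,
    ← MeasureTheory.integral_const_mul]
  calc _ = ∫ s in Ioc a t, ∫ τ in Ioc a t, semigroupIntegrand t p r g (s, τ) :=
        setIntegral_congr_fun measurableSet_Ioc fun s hs =>
          (integral_semigroupIntegrand_left hs).symm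
    _ = ∫ τ in Ioc a t, ∫ s in Ioc a t, semigroupIntegrand t p r g (s, τ) :=
        integral_integral_swap (integrable_semigroupIntegrand hp hr hpr hat hg)
    _ = _ := integral_congr_ae <| ae_mem_Ioo_restrict_Ioc.mono fun τ hτ =>
        integral_semigroupIntegrand_right hp hr hτ

end Semigroup

section RiemannLiouville

variable {a t γ p r : ℝ} {f g : ℝ → ℝ}

theorem rlInt_zero : rlInt a 0 g t = g t := if_pos rfl

theorem rlInt_of_ne_zero (hγ : γ ≠ 0) :
    rlInt a γ g t = 1 / Real.Gamma γ * ∫ τ in a..t, (t - τ) ^ (γ - 1) * g τ :=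
  if_neg hγ

theorem rlInt_one : rlInt a 1 g t = ∫ τ in a..t, g τ := by
  simp [rlInt_of_ne_zero one_ne_zero]

theorem rlInt_congr_ae (hγ : γ ≠ 0) (hfg : ∀ᵐ s ∂volume.restrict (uIoc a t), f s = g s) :
    rlInt a γ f t = rlInt a γ g t := by
  rw [rlInt_of_ne_zero hγ, rlInt_of_ne_zero hγ,
    intervalIntegral.integral_congr_ae ((ae_restrict_iff' measurableSet_uIoc).1
      (hfg.mono fun s hs => by rw [hs]))]

theorem rlInt_const_mul (c : ℝ) : rlInt a γ (fun s => c * g s) t = c * rlInt a γ g t := by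
  unfold rlInt
  split_ifs
  · rfl
  · simp_rw [mul_left_comm _ c, intervalIntegral.integral_const_mul]
    ring

theorem rlInt_add (hγ : γ ≠ 0)
    (hf : IntervalIntegrable (fun s => (t - s) ^ (γ - 1) * f s) volume a t)
    (hg : IntervalIntegrable (fun s => (t - s) ^ (γ - 1) * g s) volume a t) :
    rlInt a γ (fun s => f s + g s) t = rlInt a γ f t + rlInt a γ g t := by
  simp_rw [rlInt_of_ne_zero hγ, mul_add, intervalIntegral.integral_add hf hg, mul_add]

theorem rlInt_sub_rpow (hp : 0 < p) (hr : 0 < r) (hat : a < t) :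
    rlInt a r (fun s => (s - a) ^ (p - 1)) t =
      Real.Gamma p / Real.Gamma (p + r) * (t - a) ^ (p + r - 1) := by
  rw [rlInt_of_ne_zero hr.ne', integral_sub_rpow_mul_sub_rpow hp hr hat, ProbabilityTheory.beta]
  field_simp [(Real.Gamma_pos_of_pos hr).ne']

theorem intervalIntegrable_sub_rpow_mul_rlInt (hp : 0 < p) (hr : 0 < r) (hpr : 1 ≤ p + r)
    (hat : a ≤ t) (hg : IntervalIntegrable g volume a t) :
    IntervalIntegrable (fun s => (t - s) ^ (r - 1) * rlInt a p g s) volume a t := by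
  simp_rw [rlInt_of_ne_zero hp.ne', mul_left_comm _ (1 / Real.Gamma p)]
  exact (intervalIntegrable_sub_rpow_mul_integral hp hr hpr hat hg).const_mul _

theorem rlInt_rlInt (hp : 0 < p) (hr : 0 < r) (hpr : 1 ≤ p + r) (hat : a ≤ t)
    (hg : IntervalIntegrable g volume a t) :
    rlInt a r (rlInt a p g) t = rlInt a (p + r) g t := by
  simp_rw [rlInt_of_ne_zero hr.ne', rlInt_of_ne_zero hp.ne',
    rlInt_of_ne_zero (by linarith : p + r ≠ 0), mul_left_comm _ (1 / Real.Gamma p),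
    intervalIntegral.integral_const_mul, integral_sub_rpow_mul_integral hp hr hpr hat hg,
    ProbabilityTheory.beta]
  field_simp [(Real.Gamma_pos_of_pos hp).ne', (Real.Gamma_pos_of_pos hr).ne']

theorem intervalIntegrable_rlInt (hp : 0 < p) (hat : a ≤ t)
    (hg : IntervalIntegrable g volume a t) :
    IntervalIntegrable (rlInt a p g) volume a t := by
  simpa using intervalIntegrable_sub_rpow_mul_rlInt hp one_pos (by linarith) hat hg

theorem ae_eq_of_rlInt_ae_eq {b : ℝ} (hγ : 0 < γ) (hγ1 : γ < 1)
    (hf : IntervalIntegrable f volume a b) (hg : IntervalIntegrable g volume a b)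
    (hfg : ∀ᵐ t ∂volume.restrict (Icc a b), rlInt a γ f t = rlInt a γ g t) :
    ∀ᵐ t ∂volume.restrict (Icc a b), f t = g t := by
  refine ae_eq_of_forall_intervalIntegral_eq hf hg fun t ht => ?_
  have hsub : uIcc a t ⊆ uIcc a b := uIcc_subset_uIcc_left (Icc_subset_uIcc ht)
  have hγ' : 1 ≤ γ + (1 - γ) := by linarith
  have hrl : rlInt a (1 - γ) (rlInt a γ f) t = rlInt a (1 - γ) (rlInt a γ g) t :=
    rlInt_congr_ae (by linarith) <| ae_restrict_of_ae_restrict_of_subset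
      (uIoc_subset_uIcc.trans (hsub.trans (uIcc_of_le (ht.1.trans ht.2)).subset)) hfg
  rwa [rlInt_rlInt hγ (by linarith) hγ' ht.1 (hf.mono_set hsub),
    rlInt_rlInt hγ (by linarith) hγ' ht.1 (hg.mono_set hsub), add_sub_cancel, rlInt_one,
    rlInt_one] at hrl

end RiemannLiouville

section Volterra

variable {a c γ t : ℝ} {f : ℝ → ℝ}

noncomputable def rlVolterra (a γ c : ℝ) (f : ℝ → ℝ) : ℝ → ℝ :=
  fun t => (t - a) ^ (γ - 1) / Real.Gamma γ * c + rlInt a γ f t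

theorem rlVolterra_of_ne_zero (hγ : γ ≠ 0) :
    rlVolterra a γ c f t = (t - a) ^ (γ - 1) / Real.Gamma γ * c
      + (1 / Real.Gamma γ) * ∫ τ in a..t, (t - τ) ^ (γ - 1) * f τ := by
  rw [rlVolterra, rlInt_of_ne_zero hγ]

theorem rlVolterra_one : rlVolterra a 1 c f t = c + ∫ τ in a..t, f τ := by
  simp [rlVolterra, rlInt_one]

theorem intervalIntegrable_rlVolterra (hγ : 0 < γ) (hat : a ≤ t)
    (hf : IntervalIntegrable f volume a t) :
    IntervalIntegrable (rlVolterra a γ c f) volume a t := by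
  have hpow : IntervalIntegrable (fun s => (s - a) ^ (γ - 1)) volume a t := by
    simpa using (intervalIntegral.intervalIntegrable_rpow' (a := 0) (b := t - a)
      (r := γ - 1) (by linarith)).comp_sub_right a
  exact ((hpow.div_const _).mul_const c).add (intervalIntegrable_rlInt hγ hat hf)

theorem rlInt_rlVolterra (hγ : 0 < γ) (hγ1 : γ < 1) (hat : a < t)
    (hf : IntervalIntegrable f volume a t) :
    rlInt a (1 - γ) (rlVolterra a γ c f) t = c + ∫ τ in a..t, f τ := by
  have h1γ : 0 < 1 - γ := by linarith
  have hpow : IntervalIntegrable (fun s => (t - s) ^ (1 - γ - 1) *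
      ((s - a) ^ (γ - 1) / Real.Gamma γ * c)) volume a t :=
    ((intervalIntegrable_sub_rpow_mul_sub_rpow hγ h1γ hat).mul_const (c / Real.Gamma γ)).congr
      fun s _ => by ring
  unfold rlVolterra
  rw [rlInt_add h1γ.ne' hpow
      (intervalIntegrable_sub_rpow_mul_rlInt hγ h1γ (by linarith) hat.le hf),
    rlInt_rlInt hγ h1γ (by linarith) hat.le hf, add_sub_cancel, rlInt_one]
  simp_rw [div_mul_eq_mul_div, mul_div_assoc, mul_comm _ (c / Real.Gamma γ)]
  rw [rlInt_const_mul, rlInt_sub_rpow hγ h1γ hat, add_sub_cancel, sub_self, Real.rpow_zero,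
    Real.Gamma_one]
  field_simp [(Real.Gamma_pos_of_pos hγ).ne']

end Volterra

theorem LocIntegrableOn.intervalIntegrable {a t : ℝ} {I : Set ℝ} {f : ℝ → ℝ}
    (hf : LocIntegrableOn a I f) (hI : I ⊆ Ici a) (ht : t ∈ I) :
    IntervalIntegrable f volume a t :=
  IntegrableOn.intervalIntegrable <| by rw [uIcc_of_le (hI ht)]; exact hf t ht

section Cauchy

variable {a c γ : ℝ} {I : Set ℝ} {x y f : ℝ → ℝ}

theorem exists_ae_eq_const_add_integral_iff (haI : a ∈ I) (hI : I.OrdConnected)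
    (hf : LocIntegrableOn a I f) :
    (∃ h, LocIntegrableOn a I h ∧ (∀ᵐ t ∂volume.restrict I, y t = c + ∫ τ in a..t, h τ) ∧
        ∀ᵐ t ∂volume.restrict I, h t = f t) ↔
      ∀ᵐ t ∂volume.restrict I, y t = c + ∫ τ in a..t, f τ := by
  refine ⟨fun ⟨h, _, hy, hhf⟩ => ?_, fun hy => ⟨f, hf, hy, ae_of_all _ fun _ => rfl⟩⟩
  filter_upwards [hy, ae_restrict_mem hI.measurableSet] with t hyt ht
  rw [hyt, intervalIntegral.integral_congr_ae ((ae_restrict_iff' measurableSet_uIoc).1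
    (ae_restrict_of_ae_restrict_of_subset (uIoc_subset_uIcc.trans (hI.uIcc_subset haI ht)) hhf))]

theorem rlInt_ae_eq_iff_ae_eq_rlVolterra (haI : a ∈ I) (hIa : I ⊆ Ici a) (hI : I.OrdConnected)
    (hγ : 0 < γ) (hγ1 : γ ≤ 1) (hx : LocIntegrableOn a I x) (hf : LocIntegrableOn a I f) :
    (∀ᵐ t ∂volume.restrict I, rlInt a (1 - γ) x t = c + ∫ τ in a..t, f τ) ↔
      ∀ᵐ t ∂volume.restrict I, x t = rlVolterra a γ c f t := by
  rcases hγ1.eq_or_lt with rfl | hγ1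
  · simp only [sub_self, rlInt_zero, rlVolterra_one]
  have hne : ∀ᵐ t ∂volume.restrict I, t ≠ a := ae_restrict_of_ae (volume.ae_ne a)
  constructor
  · intro h
    refine ae_restrict_of_forall_ae_restrict_Icc hIa fun b hb => ?_
    have hfb := hf.intervalIntegrable hIa hb
    refine ae_eq_of_rlInt_ae_eq (γ := 1 - γ) (by linarith) (by linarith)
      (hx.intervalIntegrable hIa hb) (intervalIntegrable_rlVolterra hγ (hIa hb) hfb) ?_
    filter_upwards [ae_restrict_of_ae_restrict_of_subset (hI.out haI hb) (h.and hne),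
      ae_restrict_mem measurableSet_Icc] with t ⟨ht, hta⟩ htb
    rw [ht, rlInt_rlVolterra hγ hγ1 (htb.1.lt_of_ne' hta)
      (hfb.mono_set (uIcc_subset_uIcc_left (Icc_subset_uIcc htb)))]
  · intro h
    filter_upwards [ae_restrict_mem hI.measurableSet, hne] with t ht hta
    rw [rlInt_congr_ae (by linarith) (ae_restrict_of_ae_restrict_of_subset
      (uIoc_subset_uIcc.trans (hI.uIcc_subset haI ht)) h),
      rlInt_rlVolterra hγ hγ1 ((hIa ht).lt_of_ne' hta) (hf.intervalIntegrable hIa ht)]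

end Cauchy

theorem statement4_general (a : ℝ) (If : Set ℝ)
    (haI : a ∈ If) (hIsub : If ⊆ Set.Ici a)
    (hIord : If.OrdConnected)
    (m : ℕ) (α : Fin m → ℝ) (hα : ∀ i, 0 < α i ∧ α i ≤ 1)
    (qa : Fin m → ℝ) (F : (Fin m → ℝ) → ℝ → Fin m → ℝ)
    -- `F` preserves integrability
    (hFpres : ∀ q : ℝ → Fin m → ℝ, (∀ i, LocIntegrableOn a If fun t => q t i) →
      ∀ i, LocIntegrableOn a If fun t => F (q t) t i)
    (q : ℝ → Fin m → ℝ) :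
    IsRLSolution a If α qa F q ↔
      ((∀ i, LocIntegrableOn a If fun t => q t i) ∧
        ∀ i, ∀ᵐ t ∂(MeasureTheory.volume.restrict If),
          q t i = (t - a) ^ (α i - 1) / Real.Gamma (α i) * qa i
            + (1 / Real.Gamma (α i)) * ∫ τ in a..t, (t - τ) ^ (α i - 1) * F (q τ) τ i) := by
  refine and_congr_right fun hq => forall_congr' fun i => ?_
  rw [exists_ae_eq_const_add_integral_iff haI hIord (hFpres q hq i),
    rlInt_ae_eq_iff_ae_eq_rlVolterra haI hIsub hIord (hα i).1 (hα i).2 (hq i) (hFpres q hq i)]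
  simp only [rlVolterra_of_ne_zero (hα i).1.ne']

theorem statement4 (a : ℝ) (If : Set ℝ)
    (haI : a ∈ If) (hIsub : If ⊆ Set.Ici a) (hIint : (interior If).Nonempty)
    (hIord : If.OrdConnected)
    (m : ℕ) (hm : 0 < m) (α : Fin m → ℝ) (hα : ∀ i, 0 < α i ∧ α i ≤ 1)
    (qa : Fin m → ℝ) (F : (Fin m → ℝ) → ℝ → Fin m → ℝ)
    -- Carathéodory assumptions
    (hFmeas : ∀ x, MeasureTheory.AEStronglyMeasurable (fun t => F x t)
      (MeasureTheory.volume.restrict If))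
    (hFcont : ∀ᵐ t ∂(MeasureTheory.volume.restrict If), Continuous fun x => F x t)
    -- `F` preserves integrability
    (hFpres : ∀ q : ℝ → Fin m → ℝ, (∀ i, LocIntegrableOn a If fun t => q t i) →
      ∀ i, LocIntegrableOn a If fun t => F (q t) t i)
    (q : ℝ → Fin m → ℝ) :
    IsRLSolution a If α qa F q ↔
      ((∀ i, LocIntegrableOn a If fun t => q t i) ∧
        ∀ i, ∀ᵐ t ∂(MeasureTheory.volume.restrict If),
          q t i = (t - a) ^ (α i - 1) / Real.Gamma (α i) * qa i
            + (1 / Real.Gamma (α i)) * ∫ τ in a..t, (t - τ) ^ (α i - 1) * F (q τ) τ i) :=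
  statement4_general a If haI hIsub hIord m α hα qa F hFpres q
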